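/- arXiv:1611.02040 — 8 statements merged into one kernel-verified Lean document; each statement's English description precedes it below -/
import Mathlib

section
/- For every real number x with 0 < x ≤ 2·log(1+√2), one has 2 < x · cosh(x/2) / sinh(x/2) ≤ 2√2 · log(1+√2). (This gives the bounds on the boundary lengths of the collar of a simple closed geodesic of length at most 2·arcsinh(1).) -/
/-!
With `t = x / 2` the quantity is `2 * (t * cosh t / sinh t)`. The lower bound is `tanh t < t`.
For the upper bound, `t ↦ t * cosh t / sinh t` is increasing on `(0, ∞)`, the numerator of its
derivative being `sinh t * cosh t - t = sinh (2 * t) / 2 - t > 0`; at the endpoint `t = arsinh 1`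
one has `sinh t = 1` and `cosh t = √2`.
-/

open Real Set

namespace Real

lemma arsinh_one : arsinh 1 = log (1 + √2) := by
  rw [arsinh]
  norm_num [add_comm]

lemma sinh_lt_mul_cosh {t : ℝ} (ht : 0 < t) : sinh t < t * cosh t := by
  have hmono : StrictMonoOn (fun u : ℝ => u * cosh u - sinh u) (Ici 0) := by
    refine strictMonoOn_of_deriv_pos (convex_Ici 0) (by fun_prop) fun u hu => ?_
    rw [interior_Ici, mem_Ioi] at hu
    have hderiv : HasDerivAt (fun u : ℝ => u * cosh u - sinh u) (u * sinh u) u := by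
      refine (((hasDerivAt_id u).mul (hasDerivAt_cosh u)).sub (hasDerivAt_sinh u)).congr_deriv ?_
      simp
    rw [hderiv.deriv]
    exact mul_pos hu (sinh_pos_iff.2 hu)
  simpa using hmono self_mem_Ici (mem_Ici.2 ht.le) ht

lemma hasDerivAt_mul_cosh_div_sinh {t : ℝ} (ht : t ≠ 0) :
    HasDerivAt (fun u : ℝ => u * cosh u / sinh u) ((sinh (2 * t) / 2 - t) / sinh t ^ 2) t := by
  refine (((hasDerivAt_id t).mul (hasDerivAt_cosh t)).div (hasDerivAt_sinh t)
    (sinh_ne_zero.2 ht)).congr_deriv ?_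
  simp only [Pi.mul_apply, id, one_mul, sinh_two_mul]
  congr 1
  linear_combination -t * cosh_sq' t

lemma strictMonoOn_mul_cosh_div_sinh :
    StrictMonoOn (fun t : ℝ => t * cosh t / sinh t) (Ioi 0) := by
  refine strictMonoOn_of_deriv_pos (convex_Ioi 0)
    (fun t ht => (hasDerivAt_mul_cosh_div_sinh ht.ne').continuousAt.continuousWithinAt)
    fun t ht => ?_
  rw [interior_Ioi, mem_Ioi] at ht
  rw [(hasDerivAt_mul_cosh_div_sinh ht.ne').deriv]
  have h2t : 2 * t < sinh (2 * t) := self_lt_sinh_iff.2 (by positivity)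
  have hsinh : 0 < sinh t := sinh_pos_iff.2 ht
  exact div_pos (by linarith) (by positivity)

end Real

theorem collar_boundary_bounds (x : ℝ) (hx : 0 < x)
    (hx' : x ≤ 2 * Real.log (1 + Real.sqrt 2)) :
    2 < x * Real.cosh (x / 2) / Real.sinh (x / 2) ∧
      x * Real.cosh (x / 2) / Real.sinh (x / 2) ≤
        2 * Real.sqrt 2 * Real.log (1 + Real.sqrt 2) := by
  have ht : 0 < x / 2 := by positivity
  have hsinh : 0 < sinh (x / 2) := sinh_pos_iff.2 ht
  refine ⟨?_, ?_⟩
  · rw [lt_div_iff₀ hsinh]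
    linarith [sinh_lt_mul_cosh ht]
  · have hend : x / 2 ≤ arsinh 1 := by rw [arsinh_one]; linarith
    have hmono := strictMonoOn_mul_cosh_div_sinh.monotoneOn ht
      (arsinh_pos_iff.2 one_pos) hend
    rw [sinh_arsinh, cosh_arsinh, arsinh_one] at hmono
    norm_num at hmono
    have hdouble : x * cosh (x / 2) / sinh (x / 2) = 2 * (x / 2 * cosh (x / 2) / sinh (x / 2)) := by
      ring
    rw [hdouble]
    linarith
end

section
/- Let r = log(1+√2) (so that sinh r = 1, i.e. r = arcsinh(1)). Then for every real number L > 0, one has 3 + (2·cosh(L + 3r) − 2) / ((cosh r − 1)·(cosh(r/2) − 1)) ≤ e^(L+6). (This is the calculus estimate showing that a hyperbolic surface of genus g has at most (g−1)·e^(L+6) primitive closed geodesics of length at most L.) -/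
set_option maxHeartbeats 1000000 in
theorem geodesic_count_estimate (L : ℝ) (hL : 0 < L) :
    3 + (2 * Real.cosh (L + 3 * Real.log (1 + Real.sqrt 2)) - 2) /
        ((Real.cosh (Real.log (1 + Real.sqrt 2)) - 1) *
          (Real.cosh (Real.log (1 + Real.sqrt 2) / 2) - 1)) ≤
      Real.exp (L + 6) := by
  have ha : Real.sqrt 2 ^ 2 = 2 := Real.sq_sqrt (by norm_num)
  have ha1 : (1.414 : ℝ) < Real.sqrt 2 := by
    nlinarith [Real.sqrt_nonneg 2, ha]
  have ha2 : Real.sqrt 2 < 1.4143 := by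
    nlinarith [Real.sqrt_nonneg 2, ha]
  have hp : (0:ℝ) < 1 + Real.sqrt 2 := by linarith
  set r := Real.log (1 + Real.sqrt 2) with hr
  -- cosh r = sqrt 2
  have hcosh : Real.cosh r = Real.sqrt 2 := by
    rw [hr, Real.cosh_log hp]
    rw [inv_eq_one_div]
    field_simp
    nlinarith [ha]
  -- exp(r/2) = sqrt (1 + sqrt 2)
  have hs : Real.sqrt (1 + Real.sqrt 2) ^ 2 = 1 + Real.sqrt 2 := Real.sq_sqrt hp.le
  have hs1 : (1.553 : ℝ) < Real.sqrt (1 + Real.sqrt 2) := by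
    nlinarith [Real.sqrt_nonneg (1 + Real.sqrt 2), hs]
  have hs2 : Real.sqrt (1 + Real.sqrt 2) < 1.554 := by
    nlinarith [Real.sqrt_nonneg (1 + Real.sqrt 2), hs]
  have hexp_half : Real.exp (r / 2) = Real.sqrt (1 + Real.sqrt 2) := by
    have h2 : Real.exp (r / 2) ^ 2 = 1 + Real.sqrt 2 := by
      rw [← Real.exp_nat_mul]
      push_cast
      rw [show (2:ℝ) * (r/2) = r by ring, hr, Real.exp_log hp]
    nlinarith [Real.exp_pos (r/2), Real.sqrt_nonneg (1 + Real.sqrt 2), hs]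
  have hsp : (0:ℝ) < Real.sqrt (1 + Real.sqrt 2) := by linarith
  have hch : Real.cosh (r/2) = (Real.sqrt (1 + Real.sqrt 2) + (Real.sqrt (1 + Real.sqrt 2))⁻¹) / 2 := by
    rw [Real.cosh_eq, hexp_half, Real.exp_neg, hexp_half]
  have hinv : (Real.sqrt (1 + Real.sqrt 2))⁻¹ * Real.sqrt (1 + Real.sqrt 2) = 1 :=
    inv_mul_cancel₀ hsp.ne'
  have hch1 : (0.098 : ℝ) ≤ Real.cosh (r/2) - 1 := by
    rw [hch]
    nlinarith [hs, hs1, hs2, hsp, hinv, mul_pos hsp hsp]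
  -- denominator bound: D ≥ 1/25
  have hD : (1/25 : ℝ) ≤ (Real.cosh r - 1) * (Real.cosh (r/2) - 1) := by
    rw [hcosh]
    nlinarith [ha1, hch1]
  have hDpos : (0:ℝ) < (Real.cosh r - 1) * (Real.cosh (r/2) - 1) := by linarith
  -- numerator bound: 2 cosh(L+3r) - 2 ≤ exp(L+3r)
  have hr3 : Real.log (1 + Real.sqrt 2) = r := hr.symm
  have hLpos : 0 < L + 3 * r := by
    have : 0 < r := Real.log_pos (by linarith)
    linarith
  have hnum : 2 * Real.cosh (L + 3 * r) - 2 ≤ Real.exp (L + 3 * r) := by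
    rw [Real.cosh_eq]
    have h1 : Real.exp (-(L + 3 * r)) ≤ 1 := Real.exp_le_one_iff.mpr (by linarith)
    linarith
  have hnum0 : 0 ≤ 2 * Real.cosh (L + 3 * r) - 2 := by
    nlinarith [Real.one_le_cosh (L + 3 * r)]
  -- exp(L + 3r) = exp L * (1+√2)^3
  have hexp3 : Real.exp (L + 3 * r) = Real.exp L * (1 + Real.sqrt 2) ^ 3 := by
    rw [Real.exp_add]
    congr 1
    rw [show (3:ℝ) * r = (3:ℕ) * r by push_cast; ring, Real.exp_nat_mul, hr, Real.exp_log hp]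
  -- division bound
  have hdiv : (2 * Real.cosh (L + 3 * r) - 2) /
      ((Real.cosh r - 1) * (Real.cosh (r/2) - 1)) ≤ 25 * Real.exp (L + 3 * r) := by
    rw [div_le_iff₀ hDpos]
    calc 2 * Real.cosh (L + 3 * r) - 2 ≤ Real.exp (L + 3 * r) := hnum
      _ = 25 * Real.exp (L + 3 * r) * (1/25) := by ring
      _ ≤ 25 * Real.exp (L + 3 * r) * ((Real.cosh r - 1) * (Real.cosh (r/2) - 1)) := by
          apply mul_le_mul_of_nonneg_left hD
          positivity
  -- e^6 ≥ 355
  have h6 : (355:ℝ) ≤ Real.exp 6 := by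
    have h1 : (2.7182818283 : ℝ) < Real.exp 1 := Real.exp_one_gt_d9
    have : Real.exp 6 = Real.exp 1 ^ 6 := by
      rw [← Real.exp_nat_mul]; norm_num
    rw [this]
    calc (355:ℝ) ≤ (2.7182818283:ℝ)^6 := by norm_num
      _ ≤ Real.exp 1 ^ 6 := by
          apply pow_le_pow_left₀ (by norm_num) h1.le
  have hexpL : (1:ℝ) ≤ Real.exp L := Real.one_le_exp hL.le
  have hfin : Real.exp (L + 6) = Real.exp L * Real.exp 6 := Real.exp_add L 6
  calc 3 + (2 * Real.cosh (L + 3 * r) - 2) /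
        ((Real.cosh r - 1) * (Real.cosh (r/2) - 1))
      ≤ 3 + 25 * Real.exp (L + 3 * r) := by linarith
    _ = 3 + 25 * (Real.exp L * (1 + Real.sqrt 2) ^ 3) := by rw [hexp3]
    _ ≤ Real.exp L * 355 := by
        have hc : (1 + Real.sqrt 2) ^ 3 ≤ 14.08 := by
          nlinarith [ha, ha2, Real.sqrt_nonneg 2]
        nlinarith [mul_le_mul_of_nonneg_left hc (Real.exp_pos L).le, hexpL]
    _ ≤ Real.exp L * Real.exp 6 := by nlinarith [Real.exp_pos L]
    _ = Real.exp (L + 6) := hfin.symm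
end

section
/- For every natural number g ≥ 2, one has 1 / (2·sin(π/(12g − 6))) < cosh(log(4g)). (Equivalently, R_g < log(4g), where R_g := arccosh(1/(2·sin(π/(12g−6)))) is Bavard's bound: half the length of the shortest geodesic loop based at any point of a closed hyperbolic surface of genus g.) -/
/-!
Writing `12 g - 6 = 6 n` with `n = 2 g - 1`, the angle `π / (12 g - 6)` is the fraction `1 / n` of
`π / 6`. Concavity of `sin` on `[0, π]` bounds `sin` below by its chord there, so
`sin (π / (6 n)) ≥ sin (π / 6) / n = 1 / (2 n)`, and the left-hand side is at most `n = 2 g - 1`.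
On the other side `cosh (log (4 g)) = 2 g + 1 / (8 g) > 2 g`.
-/

open Real

namespace Real

theorem mul_sin_le_sin_mul {t y : ℝ} (ht₀ : 0 ≤ t) (ht₁ : t ≤ 1) (hy₀ : 0 ≤ y) (hyπ : y ≤ π) :
    t * sin y ≤ sin (t * y) := by
  simpa using strictConcaveOn_sin_Icc.concaveOn.2 ⟨le_rfl, pi_pos.le⟩ ⟨hy₀, hyπ⟩
    (sub_nonneg.2 ht₁) ht₀

theorem one_div_two_sin_pi_div_six_mul_le {n : ℝ} (hn : 1 ≤ n) :
    1 / (2 * sin (π / (6 * n))) ≤ n := by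
  have hn₀ : 0 < n := zero_lt_one.trans_le hn
  have hsin : 1 / n ≤ 2 * sin (π / (6 * n)) :=
    calc 1 / n = 2 * (n⁻¹ * sin (π / 6)) := by rw [sin_pi_div_six]; ring
      _ ≤ 2 * sin (n⁻¹ * (π / 6)) := by
        gcongr
        exact mul_sin_le_sin_mul (inv_nonneg.2 hn₀.le) (inv_le_one_of_one_le₀ hn)
          (by positivity) (by linarith [pi_pos])
      _ = 2 * sin (π / (6 * n)) := by ring_nf
  rwa [one_div_le ((one_div_pos.2 hn₀).trans_le hsin) hn₀]

theorem half_lt_cosh_log {x : ℝ} (hx : 0 < x) : x / 2 < cosh (log x) := by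
  rw [cosh_log hx]
  linarith [inv_pos.2 hx]

end Real

theorem bavard_bound_lt_log (g : ℕ) (hg : 2 ≤ g) :
    1 / (2 * Real.sin (Real.pi / (12 * (g : ℝ) - 6))) < Real.cosh (Real.log (4 * (g : ℝ))) := by
  have hg' : (2 : ℝ) ≤ g := by exact_mod_cast hg
  calc 1 / (2 * sin (π / (12 * (g : ℝ) - 6)))
      = 1 / (2 * sin (π / (6 * (2 * g - 1)))) := by ring_nf
    _ ≤ 2 * g - 1 := one_div_two_sin_pi_div_six_mul_le (by linarith)
    _ < 4 * g / 2 := by linarith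
    _ < cosh (log (4 * g)) := half_lt_cosh_log (by linarith)
end

section
/- For every real number x > 0 and every real number A > 1, one has (e^(x/2) + A) / (e^(−x/2) + A) > e^(x/(2A)). -/
/-!
Put `t = x / (4A)`, so that `x / 2 = 2At` and `x / (2A) = 2t`. After clearing the denominator,
the difference of the two sides is `2 eᵗ (sinh ((2A - 1) t) - A sinh t)`, and this is positive
because `sinh (k t) > k sinh t` for `k > 1` and `t > 0` (the derivative of `sinh (k t) - k sinh t`
is `k (cosh (k t) - cosh t) > 0`), applied with `k = 2A - 1 > A`.
-/

open Real

namespace Real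

theorem mul_sinh_lt_sinh_mul {k y : ℝ} (hk : 1 < k) (hy : 0 < y) :
    k * sinh y < sinh (k * y) := by
  have hmono : StrictMonoOn (fun t ↦ sinh (k * t) - k * sinh t) (Set.Ici 0) := by
    apply strictMonoOn_of_deriv_pos (convex_Ici 0) (by fun_prop)
    intro t ht
    rw [interior_Ici, Set.mem_Ioi] at ht
    have hderiv : HasDerivAt (fun t ↦ sinh (k * t) - k * sinh t)
        (k * (cosh (k * t) - cosh t)) t := by
      exact (((hasDerivAt_id' t).const_mul k).sinh.sub
        ((hasDerivAt_sinh t).const_mul k)).congr_deriv (by ring)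
    have hcosh : cosh t < cosh (k * t) := by
      rw [cosh_lt_cosh, abs_of_pos ht, abs_of_pos (by positivity)]
      nlinarith
    rw [hderiv.deriv]
    nlinarith
  simpa using hmono Set.self_mem_Ici (Set.mem_Ici.2 hy.le) hy

theorem exp_add_sub_exp_mul_exp_neg_add (a t : ℝ) :
    exp (2 * a * t) + a - exp (2 * t) * (exp (-(2 * a * t)) + a) =
      2 * exp t * (sinh ((2 * a - 1) * t) - a * sinh t) := by
  have h₁ : exp (2 * a * t) = exp t * exp ((2 * a - 1) * t) := by rw [← exp_add]; ring_nf
  have h₂ : exp (2 * t) = exp t * exp t := by rw [← exp_add]; ring_nf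
  have h₃ : exp (-(2 * a * t)) = (exp t * exp ((2 * a - 1) * t))⁻¹ := by
    rw [← h₁, exp_neg]
  rw [h₁, h₂, h₃, sinh_eq, sinh_eq, exp_neg, exp_neg]
  field_simp
  ring

theorem exp_two_mul_mul_exp_neg_add_lt {a t : ℝ} (ha : 1 < a) (ht : 0 < t) :
    exp (2 * t) * (exp (-(2 * a * t)) + a) < exp (2 * a * t) + a := by
  have hsinh : a * sinh t < sinh ((2 * a - 1) * t) := by
    have := mul_sinh_lt_sinh_mul (k := 2 * a - 1) (by linarith) ht
    nlinarith [sinh_pos_iff.2 ht]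
  have := exp_add_sub_exp_mul_exp_neg_add a t
  nlinarith [exp_pos t]

end Real

theorem gap_exp_inequality (x A : ℝ) (hx : 0 < x) (hA : 1 < A) :
    (Real.exp (x / 2) + A) / (Real.exp (-x / 2) + A) > Real.exp (x / (2 * A)) := by
  have hA₀ : 0 < A := by linarith
  have hx_half : x / 2 = 2 * A * (x / (4 * A)) := by field_simp; ring
  have hx_div : x / (2 * A) = 2 * (x / (4 * A)) := by field_simp; ring
  rw [gt_iff_lt, lt_div_iff₀ (by positivity), neg_div, hx_half, hx_div]
  exact exp_two_mul_mul_exp_neg_add_lt hA (by positivity)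
end

section
/- For every real number x > 0 and every real number A > 1, one has e^(x/2) + A − A·e^(x/(2A)) − e^((x/2)·(1/A − 1)) > 0. (This is the function F(x) whose positivity is proved by showing F(0) = 0 and F'(x) = (1/2)(e^(x/2) − e^(x/(2A))) + (1/2)(1 − 1/A)·e^((x/2)(1/A − 1)) > 0 for x > 0.) -/
/-!
Write `a = x / 2`. Strict convexity of `exp` between `0` and `a`, with weights `1 - 1/A` and
`1/A`, gives `A * exp (a / A) < exp a + A - 1`, so the expression exceeds
`1 - exp (a * (1 / A - 1))`, which is positive because the exponent is negative.
-/

open Real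

theorem mul_exp_div_lt_exp_add_sub_one {a A : ℝ} (ha : a ≠ 0) (hA : 1 < A) :
    A * exp (a / A) < exp a + A - 1 := by
  have hA0 : 0 < A := one_pos.trans hA
  have hconv := strictConvexOn_exp.2 (Set.mem_univ a) (Set.mem_univ 0) ha
    (inv_pos.2 hA0) (sub_pos.2 (inv_lt_one_of_one_lt₀ hA)) (add_sub_cancel _ _)
  simp only [smul_eq_mul, mul_zero, add_zero, exp_zero, mul_one] at hconv
  calc A * exp (a / A) = A * exp (A⁻¹ * a) := by rw [div_eq_inv_mul]
    _ < A * (A⁻¹ * exp a + (1 - A⁻¹)) := mul_lt_mul_of_pos_left hconv hA0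
    _ = exp a + A - 1 := by field_simp; ring

theorem exp_mul_one_div_sub_one_lt_one {a A : ℝ} (ha : 0 < a) (hA : 1 < A) :
    exp (a * (1 / A - 1)) < 1 :=
  exp_lt_one_iff.2 (mul_neg_of_pos_of_neg ha (sub_neg.2 ((div_lt_one (one_pos.trans hA)).2 hA)))

theorem F_positive (x A : ℝ) (hx : 0 < x) (hA : 1 < A) :
    Real.exp (x / 2) + A - A * Real.exp (x / (2 * A)) -
      Real.exp ((x / 2) * (1 / A - 1)) > 0 := by
  have ha : 0 < x / 2 := half_pos hx
  have hconv := mul_exp_div_lt_exp_add_sub_one ha.ne' hA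
  rw [div_div] at hconv
  linarith [exp_mul_one_div_sub_one_lt_one ha hA]
end

section
/- For every real number x > 0 and every real number A > 1, one has (2/x) · log( (e^(x/2) + A) / (e^(−x/2) + A) ) > 1/A. -/
/-!
Put `t = x / 2` and `F t = log (eᵗ + A) - log (e⁻ᵗ + A)`, so that the claim is `F t > t / A`.
Since `F 0 = 0`, it suffices that `F' t = u / (u + A) + v / (v + A)` exceeds `1 / A`, where
`u = eᵗ` and `v = e⁻ᵗ`; as `u v = 1`, clearing denominators turns this into
`(A - 1) (A (u + v) - A + 1) > 0`, which holds because `u + v ≥ 2`.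
-/

open Real

theorem one_div_lt_div_add_add_div_add {A u v : ℝ} (hA : 1 < A) (hu : 0 < u) (hv : 0 < v)
    (huv : u * v = 1) : 1 / A < u / (u + A) + v / (v + A) := by
  have hA₀ : 0 < A := by linarith
  have hsum : 2 ≤ u + v := by nlinarith [sq_nonneg (u - v)]
  rw [div_add_div _ _ (by positivity) (by positivity), div_lt_div_iff₀ hA₀ (by positivity)]
  nlinarith [mul_nonneg (sub_nonneg.2 hA.le) (sub_nonneg.2 hsum)]

theorem hasDerivAt_log_exp_add {A : ℝ} (hA : 0 ≤ A) (t : ℝ) :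
    HasDerivAt (fun s => log (exp s + A)) (exp t / (exp t + A)) t := by
  simpa using ((hasDerivAt_exp t).add_const A).log (by positivity)

theorem div_lt_log_exp_add_sub_log_exp_neg_add {A t : ℝ} (hA : 1 < A) (ht : 0 < t) :
    t / A < log (exp t + A) - log (exp (-t) + A) := by
  have hA₀ : 0 ≤ A := by linarith
  set F : ℝ → ℝ := fun s => log (exp s + A) - log (exp (-s) + A) - s / A
  have hF : ∀ s, HasDerivAt F
      (exp s / (exp s + A) + exp (-s) / (exp (-s) + A) - 1 / A) s := by
    intro s
    have hneg : HasDerivAt (fun s => log (exp (-s) + A)) (-(exp (-s) / (exp (-s) + A))) s := by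
      simpa [Function.comp_def] using (hasDerivAt_log_exp_add hA₀ (-s)).comp s (hasDerivAt_neg s)
    exact (((hasDerivAt_log_exp_add hA₀ s).sub hneg).sub
      ((hasDerivAt_id s).div_const A)).congr_deriv (by ring)
  have hmono : StrictMono F := strictMono_of_deriv_pos fun s => by
    rw [(hF s).deriv, sub_pos]
    exact one_div_lt_div_add_add_div_add hA (exp_pos s) (exp_pos (-s))
      (by rw [← exp_add, add_neg_cancel, exp_zero])
  have h := hmono ht
  simp only [F, neg_zero, sub_self, zero_div] at h
  linarith

theorem gap_log_lower_bound (x A : ℝ) (hx : 0 < x) (hA : 1 < A) :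
    (2 / x) * Real.log ((Real.exp (x / 2) + A) / (Real.exp (-x / 2) + A)) > 1 / A := by
  have key := div_lt_log_exp_add_sub_log_exp_neg_add hA (half_pos hx)
  rw [← log_div (by positivity) (by positivity), ← neg_div] at key
  calc 1 / A = (2 / x) * (x / 2 / A) := by field_simp
    _ < _ := mul_lt_mul_of_pos_left key (by positivity)
end

section
/- For all real numbers x > 0, y > 0, z > 0, one has (4/x) · artanh( sinh(x/2) / (cosh(x/2) + e^((y+z)/2)) ) > e^(−(y+z)/2). (This is part (ii) of the proposition on the gap functions: μ(x,y,z) > 1/e^((y+z)/2).) -/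
/-- The inverse hyperbolic tangent: `artanh u = (1/2) * log ((1+u)/(1-u))`. -/
noncomputable def artanh (u : ℝ) : ℝ := (1 / 2) * Real.log ((1 + u) / (1 - u))

private lemma key_mono (E : ℝ) (hE : 1 < E) :
    StrictMono (fun t : ℝ =>
      Real.log (Real.exp t + E) - Real.log (Real.exp (-t) + E) - t / E) := by
  have hE0 : 0 < E := lt_trans one_pos hE
  apply strictMono_of_deriv_pos
  intro t
  have ha : 0 < Real.exp t := Real.exp_pos t
  have hb : 0 < Real.exp (-t) := Real.exp_pos (-t)
  have h1 : HasDerivAt (fun t : ℝ => Real.exp t + E) (Real.exp t) t :=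
    (Real.hasDerivAt_exp t).add_const E
  have h2 : HasDerivAt (fun t : ℝ => Real.exp (-t) + E) (Real.exp (-t) * (-1)) t := by
    exact (((Real.hasDerivAt_exp (-t)).comp t ((hasDerivAt_id t).neg))).add_const E
  have hl1 : HasDerivAt (fun t : ℝ => Real.log (Real.exp t + E))
      (Real.exp t / (Real.exp t + E)) t := h1.log (by positivity)
  have hl2 : HasDerivAt (fun t : ℝ => Real.log (Real.exp (-t) + E))
      (Real.exp (-t) * (-1) / (Real.exp (-t) + E)) t := h2.log (by positivity)
  have h3 : HasDerivAt (fun t : ℝ => t / E) (1 / E) t := by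
    simpa using (hasDerivAt_id t).div_const E
  have hf : HasDerivAt (fun t : ℝ =>
      Real.log (Real.exp t + E) - Real.log (Real.exp (-t) + E) - t / E)
      (Real.exp t / (Real.exp t + E) - Real.exp (-t) * (-1) / (Real.exp (-t) + E) - 1 / E) t :=
    (hl1.sub hl2).sub h3
  rw [hf.deriv]
  set a := Real.exp t
  set b := Real.exp (-t)
  have hab : a * b = 1 := by
    rw [← Real.exp_add]; simp
  have hs : a + b ≥ 2 := by nlinarith [sq_nonneg (a - 1), sq_nonneg (b - 1)]
  have hpa : 0 < a + E := by positivity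
  have hpb : 0 < b + E := by positivity
  have h4 : 1 / E < a / (a + E) + b / (b + E) := by
    rw [div_add_div _ _ (ne_of_gt hpa) (ne_of_gt hpb), div_lt_div_iff₀ hE0 (mul_pos hpa hpb)]
    nlinarith [mul_nonneg (by linarith : (0:ℝ) ≤ E - 1) (by linarith : (0:ℝ) ≤ a + b - 2)]
  have h5 : b * -1 / (b + E) = -(b / (b + E)) := by ring
  rw [h5]
  linarith

private lemma key (E t : ℝ) (hE : 1 < E) (ht : 0 < t) :
    Real.log (Real.exp t + E) - Real.log (Real.exp (-t) + E) > t / E := by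
  have := key_mono E hE ht
  simpa using this

private lemma hu_aux (t E : ℝ) (hE : 0 < E) :
    (1 + Real.sinh t / (Real.cosh t + E)) / (1 - Real.sinh t / (Real.cosh t + E))
      = (Real.exp t + E) / (Real.exp (-t) + E) := by
  have h1 : Real.cosh t + Real.sinh t = Real.exp t := Real.cosh_add_sinh t
  have h2 : Real.cosh t - Real.sinh t = Real.exp (-t) := Real.cosh_sub_sinh t
  have hd : 0 < Real.cosh t + E := by positivity
  have e1 : 1 + Real.sinh t / (Real.cosh t + E) = (Real.exp t + E) / (Real.cosh t + E) := by
    field_simp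
    linarith
  have e2 : 1 - Real.sinh t / (Real.cosh t + E) = (Real.exp (-t) + E) / (Real.cosh t + E) := by
    field_simp
    linarith
  rw [e1, e2, div_div_div_cancel_right₀ (ne_of_gt hd)]

theorem mu_lower_bound (x y z : ℝ) (hx : 0 < x) (hy : 0 < y) (hz : 0 < z) :
    (4 / x) * artanh (Real.sinh (x / 2) /
        (Real.cosh (x / 2) + Real.exp ((y + z) / 2))) >
      Real.exp (-(y + z) / 2) := by
  set c := (y + z) / 2 with hc
  have hc0 : 0 < c := by positivity
  set E := Real.exp c with hEdef
  have hE : 1 < E := Real.one_lt_exp_iff.mpr hc0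
  set t := x / 2 with htdef
  have ht : 0 < t := by positivity
  have hcosh : 0 < Real.cosh t + E := by positivity
  have hu : (1 + Real.sinh t / (Real.cosh t + E)) / (1 - Real.sinh t / (Real.cosh t + E))
      = (Real.exp t + E) / (Real.exp (-t) + E) := hu_aux t E (by positivity)
  have hart : artanh (Real.sinh t / (Real.cosh t + E))
      = (1 / 2) * (Real.log (Real.exp t + E) - Real.log (Real.exp (-t) + E)) := by
    unfold artanh
    rw [hu, Real.log_div (by positivity) (by positivity)]
  rw [hart]
  have hkey := key E t hE ht
  have hxe : Real.exp (-(y + z) / 2) = 1 / E := by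
    have h5 : -(y + z) / 2 = -c := by rw [hc]; ring
    rw [h5, Real.exp_neg, one_div]
  rw [hxe]
  have h4x : (4 : ℝ) / x = 2 / t := by rw [htdef]; field_simp; ring
  rw [h4x]
  have : 2 / t * (1 / 2 * (Real.log (Real.exp t + E) - Real.log (Real.exp (-t) + E)))
      = (Real.log (Real.exp t + E) - Real.log (Real.exp (-t) + E)) / t := by
    field_simp
  rw [this, gt_iff_lt, lt_div_iff₀ ht]
  calc 1 / E * t = t / E := by ring
    _ < _ := hkey
end

section
/- For all real numbers x > 0, y > 0, z > 0, one has (4/x) · artanh( sinh(x/2) / (cosh(x/2) + e^((y+z)/2)) ) < 1 − (2/x) · artanh( sinh(x/2)·sinh(y/2) / (cosh(z/2) + cosh(x/2)·cosh(y/2)) ). (This is part (i) of the proposition on the gap functions: μ(x,y,z) < η(x,y,z).) -/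
set_option maxHeartbeats 1000000

lemma aux_main (a p q : ℝ) (ha : 1 < a) (hp : 1 < p) (hq : 1 < q) :
    4 * artanh (((a - a⁻¹) / 2) / ((a + a⁻¹) / 2 + p * q)) +
      2 * artanh ((((a - a⁻¹) / 2) * ((p - p⁻¹) / 2)) /
        ((q + q⁻¹) / 2 + ((a + a⁻¹) / 2) * ((p + p⁻¹) / 2))) < Real.log (a ^ 2) := by
  have ha0 : (0:ℝ) < a := by linarith
  have hp0 : (0:ℝ) < p := by linarith
  have hq0 : (0:ℝ) < q := by linarith
  have hai0 : 0 < a⁻¹ := inv_pos.mpr ha0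
  have hpi0 : 0 < p⁻¹ := inv_pos.mpr hp0
  have hqi0 : 0 < q⁻¹ := inv_pos.mpr hq0
  have hpq0 : (0:ℝ) < p * q := mul_pos hp0 hq0
  -- denominators
  have hd1 : (0:ℝ) < (a + a⁻¹) / 2 + p * q := by positivity
  have hd2 : (0:ℝ) < (q + q⁻¹) / 2 + ((a + a⁻¹) / 2) * ((p + p⁻¹) / 2) := by positivity
  set A := ((a - a⁻¹) / 2) / ((a + a⁻¹) / 2 + p * q) with hAdef
  set B := (((a - a⁻¹) / 2) * ((p - p⁻¹) / 2)) /
      ((q + q⁻¹) / 2 + ((a + a⁻¹) / 2) * ((p + p⁻¹) / 2)) with hBdef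
  have hA1 : A < 1 := by
    rw [hAdef, div_lt_one hd1]; linarith
  have hB1 : B < 1 := by
    rw [hBdef, div_lt_one hd2]
    nlinarith [mul_pos ha0 hpi0, mul_pos hai0 hp0]
  have h1A : (1:ℝ) - A ≠ 0 := by linarith
  have h1B : (1:ℝ) - B ≠ 0 := by linarith
  have h1apq : (0:ℝ) < 1 + a * p * q := by positivity
  have hN : (0:ℝ) < a * p * q ^ 2 + a * p + a ^ 2 * p ^ 2 * q + q := by positivity
  have hD : (0:ℝ) < a * p * q ^ 2 + a * p + a ^ 2 * q + p ^ 2 * q := by positivity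
  have hfrac1 : (1 + A) / (1 - A) = a * (a + p * q) / (1 + a * p * q) := by
    rw [div_eq_div_iff h1A h1apq.ne', hAdef]
    field_simp
    ring
  have hfrac2 : (1 + B) / (1 - B) =
      (a * p * q ^ 2 + a * p + a ^ 2 * p ^ 2 * q + q) /
        (a * p * q ^ 2 + a * p + a ^ 2 * q + p ^ 2 * q) := by
    rw [div_eq_div_iff h1B hD.ne', hBdef]
    field_simp
    ring
  have hF1 : (0:ℝ) < a * (a + p * q) / (1 + a * p * q) := by positivity
  have hF2 : (0:ℝ) < (a * p * q ^ 2 + a * p + a ^ 2 * p ^ 2 * q + q) /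
      (a * p * q ^ 2 + a * p + a ^ 2 * q + p ^ 2 * q) := by positivity
  rw [artanh, artanh, hfrac1, hfrac2]
  have hlog : 4 * (1 / 2 * Real.log (a * (a + p * q) / (1 + a * p * q))) +
      2 * (1 / 2 * Real.log ((a * p * q ^ 2 + a * p + a ^ 2 * p ^ 2 * q + q) /
        (a * p * q ^ 2 + a * p + a ^ 2 * q + p ^ 2 * q))) =
      Real.log ((a * (a + p * q) / (1 + a * p * q)) ^ 2 *
        ((a * p * q ^ 2 + a * p + a ^ 2 * p ^ 2 * q + q) /
          (a * p * q ^ 2 + a * p + a ^ 2 * q + p ^ 2 * q))) := by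
    rw [Real.log_mul (by positivity) (by positivity), Real.log_pow]
    push_cast
    ring
  rw [hlog]
  have hfin : (a * (a + p * q) / (1 + a * p * q)) ^ 2 *
      ((a * p * q ^ 2 + a * p + a ^ 2 * p ^ 2 * q + q) /
        (a * p * q ^ 2 + a * p + a ^ 2 * q + p ^ 2 * q)) < a ^ 2 := by
    rw [div_pow, div_mul_div_comm, div_lt_iff₀ (by positivity)]
    have hid : a ^ 2 * ((1 + a * p * q) ^ 2 *
          (a * p * q ^ 2 + a * p + a ^ 2 * q + p ^ 2 * q)) -
        (a * (a + p * q)) ^ 2 * (a * p * q ^ 2 + a * p + a ^ 2 * p ^ 2 * q + q) =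
        a ^ 2 * ((q ^ 2 - 1) * ((a ^ 2 - 1) *
          (p * (p * q * (1 + a ^ 2) + a * (1 + p ^ 2 * q ^ 2))))) := by
      ring
    have hq2 : (0:ℝ) < q ^ 2 - 1 := by nlinarith
    have ha2 : (0:ℝ) < a ^ 2 - 1 := by nlinarith
    have hpos : (0:ℝ) < a ^ 2 * ((q ^ 2 - 1) * ((a ^ 2 - 1) *
        (p * (p * q * (1 + a ^ 2) + a * (1 + p ^ 2 * q ^ 2))))) := by positivity
    linarith
  exact Real.log_lt_log (by positivity) hfin

theorem mu_lt_eta (x y z : ℝ) (hx : 0 < x) (hy : 0 < y) (hz : 0 < z) :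
    (4 / x) * artanh (Real.sinh (x / 2) /
        (Real.cosh (x / 2) + Real.exp ((y + z) / 2))) <
      1 - (2 / x) * artanh (Real.sinh (x / 2) * Real.sinh (y / 2) /
        (Real.cosh (z / 2) + Real.cosh (x / 2) * Real.cosh (y / 2))) := by
  have ha : 1 < Real.exp (x / 2) := by
    rw [← Real.exp_zero]; exact Real.exp_lt_exp.mpr (by linarith)
  have hp : 1 < Real.exp (y / 2) := by
    rw [← Real.exp_zero]; exact Real.exp_lt_exp.mpr (by linarith)
  have hq : 1 < Real.exp (z / 2) := by
    rw [← Real.exp_zero]; exact Real.exp_lt_exp.mpr (by linarith)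
  have H := aux_main (Real.exp (x / 2)) (Real.exp (y / 2)) (Real.exp (z / 2)) ha hp hq
  have esx : (Real.exp (x / 2) - (Real.exp (x / 2))⁻¹) / 2 = Real.sinh (x / 2) := by
    rw [Real.sinh_eq, Real.exp_neg]
  have ecx : (Real.exp (x / 2) + (Real.exp (x / 2))⁻¹) / 2 = Real.cosh (x / 2) := by
    rw [Real.cosh_eq, Real.exp_neg]
  have esy : (Real.exp (y / 2) - (Real.exp (y / 2))⁻¹) / 2 = Real.sinh (y / 2) := by
    rw [Real.sinh_eq, Real.exp_neg]
  have ecy : (Real.exp (y / 2) + (Real.exp (y / 2))⁻¹) / 2 = Real.cosh (y / 2) := by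
    rw [Real.cosh_eq, Real.exp_neg]
  have ecz : (Real.exp (z / 2) + (Real.exp (z / 2))⁻¹) / 2 = Real.cosh (z / 2) := by
    rw [Real.cosh_eq, Real.exp_neg]
  have eE : Real.exp (y / 2) * Real.exp (z / 2) = Real.exp ((y + z) / 2) := by
    rw [← Real.exp_add]; ring_nf
  have elog : Real.log (Real.exp (x / 2) ^ 2) = x := by
    rw [sq, ← Real.exp_add, show x / 2 + x / 2 = x by ring, Real.log_exp]
  rw [esx, ecx, esy, ecy, ecz, eE, elog] at H
  -- H : 4 * artanh A + 2 * artanh B < x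
  set u := artanh (Real.sinh (x / 2) / (Real.cosh (x / 2) + Real.exp ((y + z) / 2)))
  set v := artanh (Real.sinh (x / 2) * Real.sinh (y / 2) /
    (Real.cosh (z / 2) + Real.cosh (x / 2) * Real.cosh (y / 2)))
  have h1 : (4 * u + 2 * v) / x < 1 := (div_lt_one hx).mpr H
  have h2 : (4 * u + 2 * v) / x = (4 / x) * u + (2 / x) * v := by ring
  linarith [h2 ▸ h1]
end
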